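/- arXiv:1804.00916 — 2 statements merged into one kernel-verified Lean document; each statement's English description precedes it below -/
import Mathlib

section
/- Let k be a commutative ring and V = k^n with basis v_1,...,v_n. As left k[W_n]-modules, V^{⊗r} is isomorphic to the direct sum over l = 1, ..., min(n,r) of S(r,l) copies of H_n(l), where S(r,l) is the Stirling number of the second kind, i.e., the number of set-partitions of {1,...,r} into exactly l nonempty blocks. -/
/-!
A multi-index `i : Fin r → Fin n` is the same as the set-partition of the positions into the
fibres of `i` together with an injective labelling of the blocks by values, and `W_n` acts on the
labelling only. A partition into `l` blocks has such labellings only if `1 ≤ l ≤ min n r`, and the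
labellings of a fixed partition span a copy of `H_n(l)`, because `H_n(l)` is exactly the span of
the basis tensors with pairwise distinct indices: `W_n` moves `v_{n-l+1} ⊗ ⋯ ⊗ v_n` to each of them.
-/

noncomputable section

open Equiv

/-- The linear action of a group `G` on the free `k`-module `X → k` of functions,
induced from a `G`-action on `X` by `(g • f) x = f (g⁻¹ • x)`. -/
def actEnd (k : Type) [CommRing k] (G : Type) [Group G] (X : Type) [MulAction G X] :
    G →* Module.End k (X → k) where
  toFun g := LinearMap.funLeft k k fun x => g⁻¹ • x
  map_one' := by
    ext f x
    simp
  map_mul' g₁ g₂ := by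
    ext f x
    simp [mul_smul]

/-- The diagonal (value-permutation) action of the symmetric group `W_n` on
`V^{⊗r}` (`V = k^n`), modelled as the free `k`-module on multi-indices `Fin r → Fin n`;
on basis vectors, `w ⬝ (v_{i_1} ⊗ ⋯ ⊗ v_{i_r}) = v_{w i_1} ⊗ ⋯ ⊗ v_{w i_r}`. -/
def permEnd (k : Type) [CommRing k] (n r : ℕ) :
    Equiv.Perm (Fin n) →* Module.End k ((Fin r → Fin n) → k) :=
  actEnd k (Equiv.Perm (Fin n)) (Fin r → Fin n)

/-- `Φ_{n,r} : k[W_n] → End_k(V^{⊗r})`. -/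
def PhiAlg (k : Type) [CommRing k] (n r : ℕ) :
    MonoidAlgebra k (Equiv.Perm (Fin n)) →ₐ[k] Module.End k ((Fin r → Fin n) → k) :=
  MonoidAlgebra.lift k (Module.End k ((Fin r → Fin n) → k)) (Equiv.Perm (Fin n)) (permEnd k n r)

/-- The restriction of `Φ_{n,r}` to the group algebra of a subgroup `G ≤ W_n`. -/
def PhiSub (k : Type) [CommRing k] (n r : ℕ) (G : Subgroup (Equiv.Perm (Fin n))) :
    MonoidAlgebra k ↥G →ₐ[k] Module.End k ((Fin r → Fin n) → k) :=
  MonoidAlgebra.lift k (Module.End k ((Fin r → Fin n) → k)) ↥G ((permEnd k n r).comp G.subtype)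

/-- `W_{n-1} = {w ∈ W_n : w(n) = n}`, the stabilizer of the last basis vector. -/
def stabLast (n : ℕ) (hn : 0 < n) : Subgroup (Equiv.Perm (Fin n)) :=
  MulAction.stabilizer (Equiv.Perm (Fin n)) (⟨n - 1, Nat.sub_lt hn Nat.one_pos⟩ : Fin n)

/-- `V(Λ)`: the span of the basis tensors whose multi-index has value-type `Λ`
(the value-type of a multi-index `i` is the set-partition `Setoid.ker i` by fibers). -/
def Vpart (k : Type) [CommRing k] (n r : ℕ) (Λ : Setoid (Fin r)) :
    Submodule k ((Fin r → Fin n) → k) :=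
  Submodule.span k {f | ∃ i : Fin r → Fin n, Setoid.ker i = Λ ∧ f = Pi.single i 1}

/-- `V'(Λ')`: the span of the basis tensors `v_{i_1} ⊗ ⋯ ⊗ v_{i_r} ⊗ v_n`
whose multi-index `(i_1, …, i_r, n)` has value-type `Λ'`. -/
def Vpart' (k : Type) [CommRing k] (n r : ℕ) (hn : 0 < n) (Λ' : Setoid (Fin (r + 1))) :
    Submodule k ((Fin (r + 1) → Fin n) → k) :=
  Submodule.span k {f | ∃ i : Fin (r + 1) → Fin n, Setoid.ker i = Λ' ∧
    i (Fin.last r) = (⟨n - 1, Nat.sub_lt hn Nat.one_pos⟩ : Fin n) ∧ f = Pi.single i 1}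

/-- The submodule `V^{⊗r} ⊗ v_n ⊆ V^{⊗(r+1)}`. -/
def lastSub (k : Type) [CommRing k] (n r : ℕ) (hn : 0 < n) :
    Submodule k ((Fin (r + 1) → Fin n) → k) :=
  Submodule.span k {f | ∃ i : Fin (r + 1) → Fin n,
    i (Fin.last r) = (⟨n - 1, Nat.sub_lt hn Nat.one_pos⟩ : Fin n) ∧ f = Pi.single i 1}

/-- The multi-index of the tensor `v_{n-l+1} ⊗ ⋯ ⊗ v_n`. -/
def baseIdx (n l : ℕ) (h : l ≤ n) : Fin l → Fin n :=
  fun α => ⟨n - l + α.1, by have := α.isLt; omega⟩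

/-- `H_n(l)`: the `k[W_n]`-submodule of `V^{⊗l}` generated by `v_{n-l+1} ⊗ ⋯ ⊗ v_n`. -/
def Hmod (k : Type) [CommRing k] (n l : ℕ) (h : l ≤ n) :
    Submodule k ((Fin l → Fin n) → k) :=
  Submodule.span k
    (Set.range fun w : Equiv.Perm (Fin n) => permEnd k n l w (Pi.single (baseIdx n l h) 1))

/-- The multi-index of the tensor `v_{n-m} ⊗ ⋯ ⊗ v_{n-1}` (inside `U = ⟨v_1, …, v_{n-1}⟩`). -/
def baseIdx' (n m : ℕ) (h : m < n) : Fin m → Fin n :=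
  fun α => ⟨n - 1 - m + α.1, by have := α.isLt; omega⟩

/-- `H_{n-1}(m)`: the `k[W_{n-1}]`-submodule of `U^{⊗m}` generated by
`v_{n-m} ⊗ ⋯ ⊗ v_{n-1}`, where `U = ⟨v_1, …, v_{n-1}⟩`. -/
def Hprime (k : Type) [CommRing k] (n m : ℕ) (h : m < n) :
    Submodule k ((Fin m → Fin n) → k) :=
  Submodule.span k
    (Set.range fun w : ↥(stabLast n (by omega)) =>
      permEnd k n m ↑w (Pi.single (baseIdx' n m h) 1))

/-- The Young subgroup `W_{(n-l,1^l)}` of permutations fixing each of the last `l` points. -/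
def fixTop (n l : ℕ) : Subgroup (Equiv.Perm (Fin n)) where
  carrier := {w | ∀ j : Fin n, n - l ≤ (j : ℕ) → w j = j}
  one_mem' := by intro j _; rfl
  mul_mem' := by
    intro a b ha hb j hj
    simp only [Set.mem_setOf_eq] at ha hb
    rw [Equiv.Perm.mul_apply, hb j hj, ha j hj]
  inv_mem' := by
    intro a ha j hj
    simp only [Set.mem_setOf_eq] at ha
    conv_lhs => rw [← ha j hj]
    exact Equiv.symm_apply_apply a j

/-- The index of the consecutive block (with block sizes `lam`) containing position `x`. -/
def blockIdx (lam : List ℕ) (x : ℕ) : ℕ :=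
  ((List.range lam.length).filter fun t => (lam.take (t + 1)).sum ≤ x).length

/-- The Young subgroup `W_λ ≤ W_d`: permutations preserving each consecutive block
of sizes `λ_1, λ_2, …`. -/
def youngSubgroup (d : ℕ) (lam : List ℕ) : Subgroup (Equiv.Perm (Fin d)) where
  carrier := {w | ∀ j : Fin d, blockIdx lam ((w j : Fin d) : ℕ) = blockIdx lam (j : ℕ)}
  one_mem' := by intro j; rfl
  mul_mem' := by
    intro a b ha hb j
    simp only [Set.mem_setOf_eq] at ha hb
    rw [Equiv.Perm.mul_apply, ha (b j), hb j]
  inv_mem' := by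
    intro a ha j
    simp only [Set.mem_setOf_eq] at ha
    conv_rhs => rw [← show a (a⁻¹ j) = j from Equiv.apply_symm_apply a j]
    rw [ha (a⁻¹ j)]

/-- `x_λ = Σ_{w ∈ W_λ} w ∈ k[W_d]`. -/
def xElt (k : Type) [CommRing k] (d : ℕ) (lam : List ℕ) :
    MonoidAlgebra k (Equiv.Perm (Fin d)) :=
  letI := Classical.decPred (· ∈ youngSubgroup d lam)
  ∑ w ∈ Finset.univ.filter (· ∈ youngSubgroup d lam), MonoidAlgebra.single w (1 : k)

/-- `y_λ = Σ_{w ∈ W_λ} sgn(w) w ∈ k[W_d]`. -/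
def yElt (k : Type) [CommRing k] (d : ℕ) (lam : List ℕ) :
    MonoidAlgebra k (Equiv.Perm (Fin d)) :=
  letI := Classical.decPred (· ∈ youngSubgroup d lam)
  ∑ w ∈ Finset.univ.filter (· ∈ youngSubgroup d lam),
    MonoidAlgebra.single w ((Equiv.Perm.sign w : ℤ) : k)

/-- `y_λ = Σ_{w ∈ W_λ ∩ G} sgn(w) w`, as an element of the group algebra of a
subgroup `G ≤ W_d` (for `G = W_{n-1}` and `λ ⊢ n-1` this is the usual `y_λ ∈ k[W_{n-1}]`). -/
def yEltSub (k : Type) [CommRing k] {d : ℕ} (G : Subgroup (Equiv.Perm (Fin d)))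
    (lam : List ℕ) : MonoidAlgebra k ↥G :=
  letI : Fintype ↥G := Fintype.ofFinite ↥G
  letI := Classical.decPred fun w : ↥G => (w : Equiv.Perm (Fin d)) ∈ youngSubgroup d lam
  ∑ w ∈ Finset.univ.filter (fun w : ↥G => (w : Equiv.Perm (Fin d)) ∈ youngSubgroup d lam),
    MonoidAlgebra.single w ((Equiv.Perm.sign (w : Equiv.Perm (Fin d)) : ℤ) : k)

/-- The dominance order on partitions (as lists of parts): `lam ⊵ mu`. -/
def Dominates (lam mu : List ℕ) : Prop :=
  ∀ t : ℕ, (mu.take t).sum ≤ (lam.take t).sum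

/-- The conjugate (transpose) partition: `μᵀ_i = #{j : μ_j ≥ i}`. -/
def conjList (mu : List ℕ) : List ℕ :=
  (List.range mu.headI).map fun i => (mu.filter fun p => i < p).length

/-- `lam` is a partition of `d`: positive parts, in weakly decreasing order, summing to `d`. -/
def IsPartitionList (d : ℕ) (lam : List ℕ) : Prop :=
  (∀ p ∈ lam, 0 < p) ∧ lam.sum = d ∧ lam.Pairwise (· ≥ ·)

/-- The hook partition `α(d,r) = (d-r, 1^r)`. -/
def hookPartition (d r : ℕ) : List ℕ := (d - r) :: List.replicate r 1

/-- The representation of `k[W_d]` on the permutation module `M^λ`, the free `k`-module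
on the left cosets `W_d / W_λ` with `W_d` acting by left translation. -/
def PhiQuot (k : Type) [CommRing k] (d : ℕ) (lam : List ℕ) :
    MonoidAlgebra k (Equiv.Perm (Fin d)) →ₐ[k]
      Module.End k ((Equiv.Perm (Fin d) ⧸ youngSubgroup d lam) → k) :=
  MonoidAlgebra.lift k _ _
    (actEnd k (Equiv.Perm (Fin d)) (Equiv.Perm (Fin d) ⧸ youngSubgroup d lam))

/-- The representation of `k[G]` (for `G ≤ W_d`) on the permutation module on the
left cosets `G / (G ∩ W_λ)`. -/
def PhiQuotSub (k : Type) [CommRing k] {d : ℕ} (G : Subgroup (Equiv.Perm (Fin d)))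
    (lam : List ℕ) :
    MonoidAlgebra k ↥G →ₐ[k]
      Module.End k ((↥G ⧸ Subgroup.comap G.subtype (youngSubgroup d lam)) → k) :=
  MonoidAlgebra.lift k _ _
    (actEnd k ↥G (↥G ⧸ Subgroup.comap G.subtype (youngSubgroup d lam)))

/-- The Stirling number of the second kind `S(r,l)`: the number of set-partitions
of an `r`-element set into exactly `l` nonempty blocks. -/
def stirling (r l : ℕ) : ℕ :=
  Nat.card {Λ : Setoid (Fin r) // Nat.card (Quotient Λ) = l}

instance Setoid.finite (α : Type*) [Finite α] : Finite (Setoid α) :=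
  Finite.of_injective (fun s : Setoid α => ⇑s) fun _ _ h =>
    Setoid.ext fun a b => iff_of_eq (congrFun (congrFun h a) b)

section Actions

variable {k : Type} [CommRing k]

theorem actEnd_apply {G X : Type} [Group G] [MulAction G X] (g : G) (f : X → k) (x : X) :
    actEnd k G X g f x = f (g⁻¹ • x) :=
  rfl

theorem actEnd_single {G X : Type} [Group G] [MulAction G X] [DecidableEq X] (g : G) (x : X) :
    actEnd k G X g (Pi.single x 1) = Pi.single (g • x) 1 := by
  funext y
  simp only [actEnd_apply, Pi.single_apply, inv_smul_eq_iff, @eq_comm _ y]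

theorem permEnd_apply {n r : ℕ} (w : Equiv.Perm (Fin n)) (f : (Fin r → Fin n) → k)
    (u : Fin r → Fin n) : permEnd k n r w f u = f (w⁻¹ • u) :=
  rfl

theorem injective_perm_smul_iff {α β : Type*} (w : Equiv.Perm β) (u : α → β) :
    Function.Injective (w • u) ↔ Function.Injective u :=
  w.injective.of_comp_iff u

end Actions

section Hmod

variable {k : Type} [CommRing k] {n m : ℕ}

theorem baseIdx_injective (h : m ≤ n) : Function.Injective (baseIdx n m h) :=
  fun a b hab => Fin.ext (by simpa [baseIdx] using hab)

theorem single_mem_Hmod (h : m ≤ n) {u : Fin m → Fin n} (hu : Function.Injective u) :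
    Pi.single u (1 : k) ∈ Hmod k n m h := by
  obtain ⟨w, hw⟩ := Equiv.Perm.exists_smul_eq_embedding ⟨_, baseIdx_injective h⟩ ⟨u, hu⟩
  refine Submodule.subset_span ⟨w, ?_⟩
  beta_reduce
  rw [permEnd, actEnd_single]
  congr
  exact congrArg DFunLike.coe hw

theorem mem_Hmod_iff (h : m ≤ n) (f : (Fin m → Fin n) → k) :
    f ∈ Hmod k n m h ↔ ∀ u : Fin m → Fin n, ¬ Function.Injective u → f u = 0 := by
  classical
  constructor
  · intro hf
    induction hf using Submodule.span_induction with
    | mem g hg =>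
      obtain ⟨w, rfl⟩ := hg
      intro u hu
      beta_reduce
      rw [permEnd, actEnd_single]
      refine Pi.single_eq_of_ne (fun hc => hu ?_) _
      rw [hc]
      exact w.injective.comp (baseIdx_injective h)
    | zero => exact fun _ _ => rfl
    | add f g _ _ hf hg => intro u hu; simp [hf u hu, hg u hu]
    | smul c f _ hf => intro u hu; simp [hf u hu]
  · intro hf
    rw [← Finset.univ_sum_single f]
    refine Submodule.sum_mem _ fun u _ => ?_
    by_cases hu : Function.Injective u
    · rw [← mul_one (f u), ← smul_eq_mul, Pi.single_smul']
      exact Submodule.smul_mem _ _ (single_mem_Hmod h hu)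
    · simp [hf u hu]

theorem permEnd_mem_Hmod (h : m ≤ n) (w : Equiv.Perm (Fin n)) {v : (Fin m → Fin n) → k}
    (hv : v ∈ Hmod k n m h) : permEnd k n m w v ∈ Hmod k n m h := by
  rw [mem_Hmod_iff] at hv ⊢
  exact fun u hu => hv _ fun hinj => hu ((injective_perm_smul_iff _ _).mp hinj)

def embeddingFunEquivHmod (h : m ≤ n) : ((Fin m ↪ Fin n) → k) ≃ₗ[k] Hmod k n m h where
  toFun φ := ⟨fun u => if hu : Function.Injective u then φ ⟨u, hu⟩ else 0,
    (mem_Hmod_iff h _).mpr fun _ hu => dif_neg hu⟩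
  map_add' φ ψ := Subtype.ext <| funext fun u => by
    by_cases hu : Function.Injective u <;> simp [hu]
  map_smul' c φ := Subtype.ext <| funext fun u => by
    by_cases hu : Function.Injective u <;> simp [hu]
  invFun ψ t := ψ.1 t
  left_inv φ := funext fun t => dif_pos t.injective
  right_inv ψ := Subtype.ext <| funext fun u => by
    by_cases hu : Function.Injective u
    · exact dif_pos hu
    · exact (dif_neg hu).trans ((mem_Hmod_iff h ψ.1).mp ψ.2 u hu).symm

theorem embeddingFunEquivHmod_actEnd (h : m ≤ n) (w : Equiv.Perm (Fin n))
    (φ : (Fin m ↪ Fin n) → k) :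
    (embeddingFunEquivHmod h (actEnd k _ _ w φ) : (Fin m → Fin n) → k) =
      permEnd k n m w (embeddingFunEquivHmod h φ) := by
  funext u
  simp only [embeddingFunEquivHmod, LinearEquiv.coe_mk, LinearMap.coe_mk, AddHom.coe_mk,
    permEnd_apply, actEnd_apply]
  by_cases hu : Function.Injective u
  · rw [dif_pos hu, dif_pos ((injective_perm_smul_iff _ _).mpr hu)]
    rfl
  · rw [dif_neg hu, dif_neg (mt (injective_perm_smul_iff _ _).mp hu)]

end Hmod

namespace Setoid

variable {α β : Type*}

theorem ker_comp_mk {Λ : Setoid α} (t : Quotient Λ ↪ β) : ker (t ∘ Quotient.mk Λ) = Λ :=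
  Setoid.ext fun _ _ => t.injective.eq_iff.trans Quotient.eq

theorem sigma_comp_mk_injective :
    Function.Injective fun p : Σ Λ : Setoid α, Quotient Λ ↪ β => p.2 ∘ Quotient.mk p.1 := by
  rintro ⟨Λ, t⟩ ⟨Λ', t'⟩ h
  obtain rfl : Λ = Λ' := (ker_comp_mk t).symm.trans ((congrArg ker h).trans (ker_comp_mk t'))
  obtain rfl : t = t' := Function.Embedding.ext fun x => Quotient.inductionOn x (congrFun h)
  rfl

def sigmaEmbeddingEquiv (α β : Type*) : (Σ Λ : Setoid α, Quotient Λ ↪ β) ≃ (α → β) where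
  toFun p := p.2 ∘ Quotient.mk p.1
  invFun i := ⟨ker i, ⟨kerLift i, kerLift_injective i⟩⟩
  left_inv _ := sigma_comp_mk_injective rfl
  right_inv _ := rfl

def sigmaCardEquiv (α β : Type*) [Finite α] :
    (Σ m : ℕ, Σ _ : {Λ : Setoid α // Nat.card (Quotient Λ) = m}, Fin m ↪ β) ≃
      Σ Λ : Setoid α, Quotient Λ ↪ β where
  toFun p := ⟨p.2.1.1, (Finite.equivFinOfCardEq p.2.1.2).toEmbedding.trans p.2.2⟩
  invFun p := ⟨_, ⟨p.1, rfl⟩, (Finite.equivFinOfCardEq rfl).symm.toEmbedding.trans p.2⟩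
  left_inv := by
    rintro ⟨m, ⟨Λ, rfl⟩, t⟩
    exact Sigma.ext rfl <| heq_of_eq <| Sigma.ext rfl <| heq_of_eq <|
      Function.Embedding.ext fun x => by simp
  right_inv := by
    rintro ⟨Λ, s⟩
    exact Sigma.ext rfl <| heq_of_eq <| Function.Embedding.ext fun x => by simp

end Setoid

def sigmaFinSuccEquivSigmaNat {Y : ℕ → Type*} {N : ℕ}
    (hY : ∀ m, Nonempty (Y m) → 0 < m ∧ m ≤ N) : (Σ l : Fin N, Y (l + 1)) ≃ Σ m, Y m where
  toFun p := ⟨p.1 + 1, p.2⟩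
  invFun
    | ⟨0, y⟩ => absurd (hY 0 ⟨y⟩).1 (lt_irrefl 0)
    | ⟨m + 1, y⟩ => ⟨⟨m, (hY _ ⟨y⟩).2⟩, y⟩
  left_inv _ := rfl
  right_inv
    | ⟨0, y⟩ => absurd (hY 0 ⟨y⟩).1 (lt_irrefl 0)
    | ⟨_ + 1, _⟩ => rfl

theorem pos_and_le_min_of_nonempty_labelling {r n : ℕ} (hr : 0 < r) (m : ℕ)
    (h : Nonempty (Σ _ : {Λ : Setoid (Fin r) // Nat.card (Quotient Λ) = m}, Fin m ↪ Fin n)) :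
    0 < m ∧ m ≤ min n r := by
  obtain ⟨⟨Λ, rfl⟩, t⟩ := h
  have : Nonempty (Quotient Λ) := ⟨Quotient.mk Λ ⟨0, hr⟩⟩
  refine ⟨Finite.card_pos, le_min (Fin.le_of_embedding t) ?_⟩
  simpa using Nat.card_le_card_of_surjective _ (Quotient.mk_surjective (s := Λ))

def multiIndexEquiv (n r : ℕ) (hr : 0 < r) :
    (Σ l : Fin (min n r), Σ _ : Fin (stirling r (l + 1)), Fin (l + 1) ↪ Fin n) ≃
      (Fin r → Fin n) :=
  (Equiv.sigmaCongrRight fun _ => Equiv.sigmaCongrLeft (Finite.equivFin _).symm).trans <|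
    (sigmaFinSuccEquivSigmaNat (pos_and_le_min_of_nonempty_labelling hr)).trans <|
      (Setoid.sigmaCardEquiv _ _).trans (Setoid.sigmaEmbeddingEquiv _ _)

theorem multiIndexEquiv_smul {n r : ℕ} (hr : 0 < r) (w : Equiv.Perm (Fin n))
    (l : Fin (min n r)) (j : Fin (stirling r (l + 1))) (t : Fin (l + 1) ↪ Fin n) :
    multiIndexEquiv n r hr ⟨l, j, w • t⟩ = w • multiIndexEquiv n r hr ⟨l, j, t⟩ :=
  rfl

def tensorPowerDecomposition (k : Type) [CommRing k] (n r : ℕ) (hr : 0 < r) :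
    ((Fin r → Fin n) → k) ≃ₗ[k]
      ((l : Fin (min n r)) → Fin (stirling r (l + 1)) →
        Hmod k n (l + 1) (Nat.succ_le_of_lt (l.2.trans_le (min_le_left n r)))) :=
  (LinearEquiv.funCongrLeft k k (multiIndexEquiv n r hr)).trans <|
    (LinearEquiv.piCurry k fun _ _ => k).trans <|
      LinearEquiv.piCongrRight fun _ =>
        (LinearEquiv.piCurry k fun _ _ => k).trans <|
          LinearEquiv.piCongrRight fun _ => embeddingFunEquivHmod _

theorem tensorPowerDecomposition_apply {k : Type} [CommRing k] {n r : ℕ} (hr : 0 < r)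
    (f : (Fin r → Fin n) → k) (l : Fin (min n r)) (j : Fin (stirling r (l + 1))) :
    tensorPowerDecomposition k n r hr f l j =
      embeddingFunEquivHmod _ fun t => f (multiIndexEquiv n r hr ⟨l, j, t⟩) :=
  rfl

theorem tensorPowerDecomposition_permEnd {k : Type} [CommRing k] {n r : ℕ} (hr : 0 < r)
    (w : Equiv.Perm (Fin n)) (f : (Fin r → Fin n) → k) (l : Fin (min n r))
    (j : Fin (stirling r (l + 1))) :
    (tensorPowerDecomposition k n r hr (permEnd k n r w f) l j : (Fin (l + 1) → Fin n) → k) =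
      permEnd k n (l + 1) w (tensorPowerDecomposition k n r hr f l j) := by
  have hpull : (fun t => permEnd k n r w f (multiIndexEquiv n r hr ⟨l, j, t⟩)) =
      actEnd k _ _ w fun t => f (multiIndexEquiv n r hr ⟨l, j, t⟩) := by
    funext t
    rw [permEnd_apply, actEnd_apply, multiIndexEquiv_smul]
  rw [tensorPowerDecomposition_apply, tensorPowerDecomposition_apply, hpull,
    embeddingFunEquivHmod_actEnd]

/-- As left `k[W_n]`-modules, `V^{⊗r} ≅ ⨁_{l=1}^{min(n,r)} H_n(l)^{S(r,l)}`,
where `S(r,l)` is the Stirling number of the second kind. -/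
theorem stmt_9 (k : Type) [CommRing k] (n r : ℕ) (hr : 0 < r) :
    ∃ (hst : ∀ (m : ℕ) (hm : m ≤ n) (w : Equiv.Perm (Fin n))
        (v : (Fin m → Fin n) → k),
          v ∈ Hmod k n m hm → permEnd k n m w v ∈ Hmod k n m hm)
      (e : ((Fin r → Fin n) → k) ≃ₗ[k]
        ((l : Fin (min n r)) → Fin (stirling r (l.1 + 1)) →
          ↥(Hmod k n (l.1 + 1) (by have := l.isLt; omega)))),
      ∀ (w : Equiv.Perm (Fin n)) (f : (Fin r → Fin n) → k)
        (l : Fin (min n r)) (j : Fin (stirling r (l.1 + 1))),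
        e (permEnd k n r w f) l j =
          ⟨permEnd k n (l.1 + 1) w ↑(e f l j),
            hst (l.1 + 1) (by have := l.isLt; omega) w ↑(e f l j) (e f l j).2⟩ :=
  ⟨fun _ hm w _ hv => permEnd_mem_Hmod hm w hv, tensorPowerDecomposition k n r hr,
    fun w f l j => Subtype.ext (tensorPowerDecomposition_permEnd hr w f l j)⟩
end
end

section
/- Let k be a nontrivial commutative ring and V = k^n with basis v_1,...,v_n. If n - 2 ≤ r, then the algebra homomorphism Φ_{n,r+1/2} : k[W_{n-1}] → End_k(V^{⊗r}) induced by restricting the diagonal basis-permuting action of W_n on V^{⊗r} to W_{n-1} = {w ∈ W_n : w(n) = n} is injective. -/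
/-!
For any group `G` acting on a set `X`, the permutation representation of `k[G]` on `X → k` is
faithful as soon as some orbit is free: applying `a = ∑ c_g g` to the basis vector at `x` and
reading off the coordinate at `g • x` recovers `c_g`. Cut off or padded to length `r ≥ n - 2`,
the multi-index `(1, 2, …, n - 1, n, n, …)` contains each of `1, …, n - 2`, so an element of
`W_{n-1}` fixing it fixes every letter except possibly `n - 1`, hence is the identity.
-/

noncomputable section

open Equiv

theorem Equiv.Perm.eq_of_apply_eq_of_ne {α : Type*} {σ τ : Perm α} (a : α)
    (h : ∀ j, j ≠ a → σ j = τ j) : σ = τ := by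
  ext j
  by_cases hj : j = a
  · subst hj
    by_contra hne
    have hb : τ.symm (σ j) ≠ j := fun hb => hne (τ.symm_apply_eq.mp hb)
    have := h _ hb
    rw [τ.apply_symm_apply] at this
    exact hb (σ.injective this)
  · exact h j hj

section FreeOrbit

variable {k : Type} [CommRing k] {G : Type} [Group G] {X : Type} [MulAction G X] [DecidableEq X]

theorem lift_actEnd_apply_single_smul {x : X} (hx : Function.Injective fun g : G => g • x)
    (a : MonoidAlgebra k G) (g : G) :
    MonoidAlgebra.lift k _ G (actEnd k G X) a (Pi.single x 1) (g • x) = a.coeff g := by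
  induction a using MonoidAlgebra.induction_linear with
  | zero => simp
  | add a b ha hb => simp [ha, hb]
  | single h c =>
    classical
    have hfix : h⁻¹ • g • x = x ↔ h = g := by
      rw [inv_smul_eq_iff, eq_comm]
      exact hx.eq_iff
    simp only [MonoidAlgebra.lift_single, actEnd, MonoidAlgebra.coeff_single, MonoidHom.coe_mk,
      OneHom.coe_mk, LinearMap.smul_apply, Pi.smul_apply, LinearMap.funLeft_apply, Pi.single_apply,
      smul_eq_mul, mul_ite, mul_one, mul_zero, Finsupp.single_apply]
    exact if_congr hfix rfl rfl

theorem lift_actEnd_injective {x : X} (hx : Function.Injective fun g : G => g • x) :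
    Function.Injective (MonoidAlgebra.lift k _ G (actEnd k G X)) := by
  intro a b hab
  ext g
  simpa only [lift_actEnd_apply_single_smul hx] using
    congrFun (LinearMap.congr_fun hab (Pi.single x 1)) (g • x)

end FreeOrbit

-- The multi-index `(1, 2, …, n - 1, n, n, …)` of length `r`, letters counted from `0`.
def clampIdx (n r : ℕ) (hn : 0 < n) : Fin r → Fin n := fun α => ⟨min α (n - 1), by omega⟩

theorem smul_clampIdx_injective {n r : ℕ} (hn : 0 < n) (hr : n - 2 ≤ r) :
    Function.Injective fun w : stabLast n hn => w • clampIdx n r hn := by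
  intro w w' hww
  apply Subtype.ext
  apply Equiv.Perm.eq_of_apply_eq_of_ne (⟨n - 2, by omega⟩ : Fin n)
  intro j hj
  by_cases hlast : (j : ℕ) = n - 1
  · have hj : j = ⟨n - 1, Nat.sub_lt hn Nat.one_pos⟩ := Fin.ext hlast
    rw [hj]
    exact w.2.trans w'.2.symm
  · have hjr : (j : ℕ) < r := by have : (j : ℕ) ≠ n - 2 := fun h => hj (Fin.ext h); omega
    have hclamp : clampIdx n r hn ⟨j, hjr⟩ = j := by ext; simp [clampIdx]; omega
    simpa [hclamp, Subgroup.smul_def, Perm.smul_def] using congrFun hww ⟨j, hjr⟩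

theorem stmt_12_general (k : Type) [CommRing k] (n r : ℕ) (hn : 0 < n)
    (hr : n - 2 ≤ r) : Function.Injective ⇑(PhiSub k n r (stabLast n hn)) :=
  lift_actEnd_injective (smul_clampIdx_injective hn hr)

/-- If `n - 2 ≤ r`, the representation `Φ_{n,r+1/2} : k[W_{n-1}] → End_k(V^{⊗r})`
is faithful. -/
theorem stmt_12 (k : Type) [CommRing k] [Nontrivial k] (n r : ℕ) (hn : 0 < n)
    (hr : n - 2 ≤ r) : Function.Injective ⇑(PhiSub k n r (stabLast n hn)) :=
  stmt_12_general k n r hn hr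
end
end
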